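/- For β > 1 and h > 0, the function I_{β,h}(m) = −β(½m² + hm) + ((1−m)/2) log(1−m) + ((1+m)/2) log(1+m) on (−1,1) has a unique global minimizer m₀, and m₀ is the largest solution in (−1,1) of the Curie-Weiss equation βm + βh = ½ log((1+m)/(1−m)) (equivalently m = tanh(β(m+h))); in particular m₀ ∈ (0,1). -/

import Mathlib

/-!
`I'(m) = artanh m - β (m + h)` is convex on `[0, 1)` and negative at `0`, while at
`b = tanh (β (1 + h))` it equals `β (1 - b) > 0`. Hence it has a zero `m₀ ∈ (0, 1)`, and convexity
forces `I' < 0` on `(0, m₀)` and `I' > 0` on `(m₀, 1)`, so `m₀` is the strict minimizer of `I`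
on `[0, 1)`. Negative `m` lose to `-m` because `I(m) - I(-m) = -2βhm > 0`. Finally the zeros of
`I'` in `(-1, 1)` are exactly the solutions of `m = tanh (β (m + h))`, and none lies beyond `m₀`.
-/

/-- The rate function of the Curie-Weiss model:
`I_{β,h}(m) = -β(½m² + hm) + ((1-m)/2) log(1-m) + ((1+m)/2) log(1+m)`. -/
noncomputable def cwRate (β h m : ℝ) : ℝ :=
  -β * ((1 / 2) * m ^ 2 + h * m) +
    ((1 - m) / 2) * Real.log (1 - m) + ((1 + m) / 2) * Real.log (1 + m)

open Real Set

namespace Real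

theorem artanh_eq_half_mul_log_sub_log {x : ℝ} (hx : x ∈ Ioo (-1) 1) :
    artanh x = 1 / 2 * (log (1 + x) - log (1 - x)) := by
  rw [artanh_eq_half_log (Ioo_subset_Icc_self hx), log_div] <;> grind

theorem hasDerivAt_artanh {x : ℝ} (hx : x ∈ Ioo (-1) 1) :
    HasDerivAt artanh (1 - x ^ 2)⁻¹ x := by
  have h₁ : 1 + x ≠ 0 := by grind
  have h₂ : 1 - x ≠ 0 := by grind
  have hlog : HasDerivAt (fun y => 1 / 2 * (log (1 + y) - log (1 - y))) (1 - x ^ 2)⁻¹ x := by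
    refine (((((hasDerivAt_id' x).const_add 1).log h₁).sub
      (((hasDerivAt_id' x).const_sub 1).log h₂)).const_mul (1 / 2 : ℝ)).congr_deriv ?_
    rw [show 1 - x ^ 2 = (1 + x) * (1 - x) by ring]
    field_simp
    ring
  exact hlog.congr_of_eventuallyEq <| Filter.eventually_of_mem (isOpen_Ioo.mem_nhds hx)
    fun y hy => artanh_eq_half_mul_log_sub_log hy

theorem continuousOn_artanh : ContinuousOn artanh (Ioo (-1) 1) :=
  fun _ hx => (hasDerivAt_artanh hx).continuousAt.continuousWithinAt

theorem convexOn_artanh : ConvexOn ℝ (Ico 0 1) artanh := by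
  have hsub : Ico (0 : ℝ) 1 ⊆ Ioo (-1) 1 := fun x hx => ⟨by linarith [hx.1], hx.2⟩
  refine MonotoneOn.convexOn_of_deriv (convex_Ico 0 1) (continuousOn_artanh.mono hsub)
    (fun x hx => ?_) ?_ <;> rw [interior_Ico] at *
  · exact (hasDerivAt_artanh (hsub (Ioo_subset_Ico_self hx))).differentiableAt
      |>.differentiableWithinAt
  · intro x hx y hy hxy
    rw [(hasDerivAt_artanh (hsub (Ioo_subset_Ico_self hx))).deriv,
      (hasDerivAt_artanh (hsub (Ioo_subset_Ico_self hy))).deriv]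
    exact inv_anti₀ (by nlinarith [hy.2, hy.1]) (by nlinarith [hx.1])

theorem tanh_pos {x : ℝ} (hx : 0 < x) : 0 < tanh x := by
  rw [tanh_eq_sinh_div_cosh]
  exact div_pos (sinh_pos_iff.2 hx) (cosh_pos x)

end Real

theorem ConvexOn.lt_of_mem_Ioo {f : ℝ → ℝ} {s : Set ℝ} {a b x : ℝ} (hf : ConvexOn ℝ s f)
    (ha : a ∈ s) (hb : b ∈ s) (hfab : f a < f b) (hx : x ∈ Ioo a b) : f x < f b :=
  lt_of_not_ge fun hbx =>
    (hf.lt_right_of_left_lt ha hb (Ioo_subset_openSegment hx) (hfab.trans_le hbx)).not_ge hbx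

noncomputable def cwRateDeriv (β h m : ℝ) : ℝ := artanh m - β * (m + h)

section

variable {β h m m₀ : ℝ}

theorem hasDerivAt_cwRate (hm : m ∈ Ioo (-1) 1) :
    HasDerivAt (cwRate β h) (cwRateDeriv β h m) m := by
  have h₁ : 1 + m ≠ 0 := by grind
  have h₂ : 1 - m ≠ 0 := by grind
  have hid := hasDerivAt_id' m
  refine ((((hid.pow 2).const_mul (1 / 2 : ℝ)).add (hid.const_mul h)).const_mul (-β) |>.add
    (((hid.const_sub 1).div_const 2).mul ((hid.const_sub 1).log h₂)) |>.add
    (((hid.const_add 1).div_const 2).mul ((hid.const_add 1).log h₁))).congr_deriv ?_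
  rw [cwRateDeriv, artanh_eq_half_mul_log_sub_log hm]
  field_simp
  ring

theorem continuousOn_cwRate : ContinuousOn (cwRate β h) (Ioo (-1) 1) :=
  fun _ hm => (hasDerivAt_cwRate hm).continuousAt.continuousWithinAt

theorem cwRate_neg (β h m : ℝ) : cwRate β h (-m) = cwRate β h m + 2 * β * h * m := by
  simp only [cwRate, sub_neg_eq_add, ← sub_eq_add_neg]
  ring

theorem convexOn_cwRateDeriv : ConvexOn ℝ (Ico 0 1) (cwRateDeriv β h) := by
  have haff := ((LinearMap.mulLeft ℝ (-β)).convexOn (convex_Ico (0 : ℝ) 1)).add_const (-β * h)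
  have hsplit : cwRateDeriv β h = artanh + (⇑(LinearMap.mulLeft ℝ (-β)) + fun _ => -β * h) := by
    funext m
    simp only [cwRateDeriv, Pi.add_apply, LinearMap.mulLeft_apply]
    ring
  rw [hsplit]
  exact convexOn_artanh.add haff

theorem eq_tanh_iff_cwRateDeriv_eq_zero (hm : m ∈ Ioo (-1) 1) :
    m = tanh (β * (m + h)) ↔ cwRateDeriv β h m = 0 := by
  rw [cwRateDeriv, sub_eq_zero]
  constructor
  · intro hfix
    rw [hfix, artanh_tanh, ← hfix]
  · intro hart
    rw [← hart, tanh_artanh hm]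

theorem continuousOn_cwRateDeriv : ContinuousOn (cwRateDeriv β h) (Ioo (-1) 1) :=
  continuousOn_artanh.sub (by fun_prop)

theorem cwRateDeriv_zero_neg (hβ : 0 < β) (hh : 0 < h) : cwRateDeriv β h 0 < 0 := by
  simp only [cwRateDeriv, artanh_zero, zero_add, zero_sub, neg_neg_iff_pos]
  positivity

theorem exists_cwRateDeriv_eq_zero (hβ : 0 < β) (hh : 0 < h) :
    ∃ m₀ ∈ Ioo 0 1, cwRateDeriv β h m₀ = 0 := by
  set b := tanh (β * (1 + h)) with hb_def
  have hb : b ∈ Ioo 0 1 := ⟨tanh_pos (by positivity), tanh_lt_one _⟩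
  have hGb : 0 < cwRateDeriv β h b := by
    rw [cwRateDeriv, hb_def, artanh_tanh, ← hb_def]
    nlinarith [hb.2]
  have hcont : ContinuousOn (cwRateDeriv β h) (Icc 0 b) :=
    continuousOn_cwRateDeriv.mono fun x hx => ⟨by linarith [hx.1], hx.2.trans_lt hb.2⟩
  obtain ⟨m₀, hm₀, hG⟩ := intermediate_value_Ioo hb.1.le hcont ⟨cwRateDeriv_zero_neg hβ hh, hGb⟩
  exact ⟨m₀, ⟨hm₀.1, hm₀.2.trans hb.2⟩, hG⟩

theorem cwRateDeriv_neg_of_mem_Ioo (hβ : 0 < β) (hh : 0 < h) (hm₀ : m₀ ∈ Ioo 0 1)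
    (hG : cwRateDeriv β h m₀ = 0) (hm : m ∈ Ioo 0 m₀) : cwRateDeriv β h m < 0 :=
  hG ▸ convexOn_cwRateDeriv.lt_of_mem_Ioo (left_mem_Ico.2 one_pos) ⟨hm₀.1.le, hm₀.2⟩
    (hG ▸ cwRateDeriv_zero_neg hβ hh) hm

theorem cwRateDeriv_pos_of_mem_Ioo (hβ : 0 < β) (hh : 0 < h) (hm₀ : m₀ ∈ Ioo 0 1)
    (hG : cwRateDeriv β h m₀ = 0) (hm : m ∈ Ioo m₀ 1) : 0 < cwRateDeriv β h m :=
  hG ▸ convexOn_cwRateDeriv.strictMonoOn (left_mem_Ico.2 one_pos) hm₀.1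
    (hG ▸ cwRateDeriv_zero_neg hβ hh) ⟨⟨hm₀.1.le, hm₀.2⟩, self_mem_Ici⟩
    ⟨⟨(hm₀.1.trans hm.1).le, hm.2⟩, mem_Ici.2 hm.1.le⟩ hm.1

theorem cwRate_lt_of_mem_Ico (hβ : 0 < β) (hh : 0 < h) (hm₀ : m₀ ∈ Ioo 0 1)
    (hG : cwRateDeriv β h m₀ = 0) (hm : m ∈ Ico 0 1) (hne : m ≠ m₀) :
    cwRate β h m₀ < cwRate β h m := by
  rcases hne.lt_or_gt with hlt | hgt
  · have hanti : StrictAntiOn (cwRate β h) (Icc 0 m₀) := by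
      refine strictAntiOn_of_deriv_neg (convex_Icc 0 m₀)
        (continuousOn_cwRate.mono (Icc_subset_Ioo (by norm_num) hm₀.2)) fun x hx => ?_
      rw [interior_Icc] at hx
      rw [(hasDerivAt_cwRate ⟨by linarith [hx.1], hx.2.trans hm₀.2⟩).deriv]
      exact cwRateDeriv_neg_of_mem_Ioo hβ hh hm₀ hG hx
    exact hanti ⟨hm.1, hlt.le⟩ ⟨hm₀.1.le, le_rfl⟩ hlt
  · have hmono : StrictMonoOn (cwRate β h) (Ico m₀ 1) := by
      refine strictMonoOn_of_deriv_pos (convex_Ico m₀ 1)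
        (continuousOn_cwRate.mono fun x hx => ⟨by linarith [hm₀.1, hx.1], hx.2⟩) fun x hx => ?_
      rw [interior_Ico] at hx
      rw [(hasDerivAt_cwRate ⟨by linarith [hm₀.1, hx.1], hx.2⟩).deriv]
      exact cwRateDeriv_pos_of_mem_Ioo hβ hh hm₀ hG hx
    exact hmono ⟨le_rfl, hm₀.2⟩ ⟨hgt.le, hm.2⟩ hgt

theorem cwRate_lt_of_ne (hβ : 0 < β) (hh : 0 < h) (hm₀ : m₀ ∈ Ioo 0 1)
    (hG : cwRateDeriv β h m₀ = 0) (hm : m ∈ Ioo (-1) 1) (hne : m ≠ m₀) :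
    cwRate β h m₀ < cwRate β h m := by
  rcases le_or_gt 0 m with hm0 | hm0
  · exact cwRate_lt_of_mem_Ico hβ hh hm₀ hG ⟨hm0, hm.2⟩ hne
  · have hflip : cwRate β h (-m) < cwRate β h m := by
      rw [← neg_neg m, cwRate_neg β h (-m), neg_neg]
      nlinarith [mul_pos hβ hh]
    have hle : cwRate β h m₀ ≤ cwRate β h (-m) := by
      rcases eq_or_ne (-m) m₀ with heq | hne'
      · rw [heq]
      · exact (cwRate_lt_of_mem_Ico hβ hh hm₀ hG ⟨by linarith, by linarith [hm.1]⟩ hne').le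
    exact hle.trans_lt hflip

end

/-- for `β > 1` and `h > 0`, the rate function `I_{β,h}` on `(-1,1)` has a
unique global minimizer `m₀`; moreover `m₀ ∈ (0,1)` and `m₀` is the largest solution in
`(-1,1)` of the Curie-Weiss equation `m = tanh(β(m+h))`. -/
theorem curieWeiss_rate_unique_minimizer (β h : ℝ) (hβ : 1 < β) (hh : 0 < h) :
    ∃ m₀ ∈ Set.Ioo (0 : ℝ) 1,
      (∀ m ∈ Set.Ioo (-1 : ℝ) 1, cwRate β h m₀ ≤ cwRate β h m) ∧
      (∀ m' ∈ Set.Ioo (-1 : ℝ) 1,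
        (∀ m ∈ Set.Ioo (-1 : ℝ) 1, cwRate β h m' ≤ cwRate β h m) → m' = m₀) ∧
      m₀ = Real.tanh (β * (m₀ + h)) ∧
      (∀ m ∈ Set.Ioo (-1 : ℝ) 1, m = Real.tanh (β * (m + h)) → m ≤ m₀) := by
  have hβ₀ : 0 < β := one_pos.trans hβ
  obtain ⟨m₀, hm₀, hG⟩ := exists_cwRateDeriv_eq_zero hβ₀ hh
  have hm₀' : m₀ ∈ Ioo (-1) 1 := ⟨by linarith [hm₀.1], hm₀.2⟩
  have hlt : ∀ m ∈ Ioo (-1 : ℝ) 1, m ≠ m₀ → cwRate β h m₀ < cwRate β h m :=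
    fun _ hm hne => cwRate_lt_of_ne hβ₀ hh hm₀ hG hm hne
  refine ⟨m₀, hm₀, fun m hm => ?_, fun m hm hmin => ?_,
    (eq_tanh_iff_cwRateDeriv_eq_zero hm₀').2 hG, fun m hm hfix => ?_⟩
  · rcases eq_or_ne m m₀ with rfl | hne
    · exact le_rfl
    · exact (hlt m hm hne).le
  · by_contra hne
    exact (hmin m₀ hm₀').not_gt (hlt m hm hne)
  · by_contra! hgt
    exact (cwRateDeriv_pos_of_mem_Ioo hβ₀ hh hm₀ hG ⟨hgt, hm.2⟩).ne'
      ((eq_tanh_iff_cwRateDeriv_eq_zero hm).1 hfix)
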